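/- Let N ≥ 2 and d ≥ 2 be integers, let L be a closed d-manifold, and suppose a ℤ/N-graded sequence of ℤ/2-vector spaces (HF^j)_{j ∈ ℤ/N} satisfies: (i) 2-periodicity, HF^j ≅ HF^{j+2} for all j; (ii) HF^j ≅ ⊕_{k ≡ j mod N} H^k(L; ℤ/2). If N = d + 2 and the total cohomology of L is concentrated as for a simply connected closed d-manifold with H⁰ = H^d = ℤ/2, then: if d is odd, the relations force all H^k(L;ℤ/2) with k ∉ {0,d} to vanish and H⁰ ≅ H² ≅ ⋯, a contradiction (no such L exists); if d is even, they force H^k(L;ℤ/2) = ℤ/2 for all even k in [0,d] and 0 for odd k, i.e. the ℤ/2-cohomology of ℂP^{d/2}. -/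
import Mathlib


open Finset

/-- Arithmetic consequence of 2-periodic `ℤ/(d+2)`-graded Floer cohomology for a closed
connected simply connected `d`-manifold `L` with `H⁰(L;ℤ/2) = H^d(L;ℤ/2) = ℤ/2`
(Poincaré duality). Here `h k = dim_{ℤ/2} H^k(L;ℤ/2)` (with `h k = 0` for `k > d`
implicit in summing over `0 ≤ k ≤ d`), and
`HF^j = ⊕_{k ≡ j mod (d+2)} H^k(L;ℤ/2)`. If `N = d + 2` and the 2-periodicity
`HF^j ≅ HF^{j+2}` holds for all `j ∈ ℤ/(d+2)` (at the level of dimensions), then: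
if `d` is odd the relations are contradictory (no such `L` exists); if `d` is even they
force `h k = 1` for even `k ≤ d` and `h k = 0` for odd `k ≤ d`, i.e. `L` has the
`ℤ/2`-cohomology of `ℂP^{d/2}`. -/
theorem stmt19 (d : ℕ) (hd : 2 ≤ d) (h : ℕ → ℕ)
    (h0 : h 0 = 1) (hdtop : h d = 1) (h1 : h 1 = 0)
    (hPD : ∀ k ≤ d, h k = h (d - k))
    (hper : ∀ j : ZMod (d + 2),
      (∑ k ∈ Finset.range (d + 1), if ((k : ZMod (d + 2)) = j) then h k else 0) =
        (∑ k ∈ Finset.range (d + 1), if ((k : ZMod (d + 2)) = j + 2) then h k else 0)) :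
    (Odd d → False) ∧
      (Even d → ∀ k ≤ d, h k = if Even k then 1 else 0) := by
  set f : ZMod (d + 2) → ℕ :=
    fun j => ∑ k ∈ Finset.range (d + 1), if ((k : ZMod (d + 2)) = j) then h k else 0 with hf
  have hval : ∀ m, m < d + 2 → ∀ k, k < d + 2 →
      ((k : ZMod (d + 2)) = (m : ZMod (d + 2))) → k = m := by
    intro m hm k hk hkm
    have := congrArg ZMod.val hkm
    rwa [ZMod.val_cast_of_lt hk, ZMod.val_cast_of_lt hm] at this
  have hfm : ∀ m ≤ d, f (m : ZMod (d + 2)) = h m := by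
    intro m hm
    show (∑ k ∈ Finset.range (d + 1), if ((k : ZMod (d + 2)) = (m : ZMod (d + 2))) then h k else 0) = h m
    rw [Finset.sum_eq_single m]
    · simp
    · intro k hk hkm
      rw [if_neg]
      intro hc
      exact hkm (hval m (by omega) k (by simp only [Finset.mem_range] at hk; omega) hc)
    · intro hm'
      simp only [Finset.mem_range] at hm'
      omega
  have hftop : f ((d + 1 : ℕ) : ZMod (d + 2)) = 0 := by
    show (∑ k ∈ Finset.range (d + 1), if ((k : ZMod (d + 2)) = ((d + 1 : ℕ) : ZMod (d + 2))) then h k else 0) = 0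
    apply Finset.sum_eq_zero
    intro k hk
    rw [if_neg]
    intro hc
    have hk' : k < d + 1 := Finset.mem_range.mp hk
    have := hval (d + 1) (by omega) k (by omega) hc
    omega
  have hiter : ∀ t : ℕ, ∀ j : ZMod (d + 2), f j = f (j + 2 * t) := by
    intro t
    induction t with
    | zero => simp
    | succ n ih =>
      intro j
      have h2 : f (j + 2 * (n : ℕ)) = f (j + 2 * (n : ℕ) + 2) := hper (j + 2 * (n : ℕ))
      rw [ih j, h2]
      congr 1
      push_cast
      ring
  have hf0 : f 0 = 1 := by
    have := hfm 0 (by omega)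
    simpa [h0] using this
  have hf1 : f 1 = 0 := by
    have := hfm 1 (by omega)
    simpa [h1] using this
  constructor
  · intro hodd
    obtain ⟨s, hs⟩ := hodd
    have e1 : f 0 = f ((0 : ZMod (d + 2)) + 2 * ((s + 1 : ℕ) : ZMod (d + 2))) := hiter (s + 1) 0
    have hnat : (2 * (s + 1) : ℕ) = d + 1 := by omega
    have hcast : ((0 : ZMod (d + 2)) + 2 * ((s + 1 : ℕ) : ZMod (d + 2))) = ((d + 1 : ℕ) : ZMod (d + 2)) := by
      rw [zero_add, ← hnat]
      push_cast
      ring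
    rw [hcast, hftop] at e1
    omega
  · intro heven k hk
    by_cases hke : Even k
    · obtain ⟨s, hs⟩ := hke
      have e1 : f 0 = f ((0 : ZMod (d + 2)) + 2 * ((s : ℕ) : ZMod (d + 2))) := hiter s 0
      have hnat : (2 * s : ℕ) = k := by omega
      have hcast : ((0 : ZMod (d + 2)) + 2 * ((s : ℕ) : ZMod (d + 2))) = ((k : ℕ) : ZMod (d + 2)) := by
        rw [zero_add, ← hnat]
        push_cast
        ring
      rw [hcast, hfm k hk] at e1
      have hke' : Even k := ⟨s, hs⟩
      simp only [hke', if_true]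
      omega
    · have hko : Odd k := Nat.odd_iff.mpr (Nat.not_even_iff.mp hke)
      obtain ⟨s, hs⟩ := hko
      have e1 : f 1 = f ((1 : ZMod (d + 2)) + 2 * ((s : ℕ) : ZMod (d + 2))) := hiter s 1
      have hnat : (2 * s + 1 : ℕ) = k := by omega
      have hcast : ((1 : ZMod (d + 2)) + 2 * ((s : ℕ) : ZMod (d + 2))) = ((k : ℕ) : ZMod (d + 2)) := by
        rw [← hnat]
        push_cast
        ring
      rw [hcast, hfm k hk] at e1
      simp only [hke, if_false]
      omega
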